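/- There exists a function F̄ : S_n → Mat_n(ℤ) such that: (i) for every braid β ∈ B_n, writing SGE(β) = (M_β, π_β), one has F̄(π_β) = M_β − M_βᵀ (so M_β − M_βᵀ depends only on the underlying permutation of β); (ii) F̄ is a 1-cocycle for the action of S_n on matrices: F̄(στ) = F̄(σ) + σ·F̄(τ) for all σ, τ ∈ S_n; and (iii) F̄(σ) is antisymmetric for every σ ∈ S_n. -/

import Mathlib

/-!
Let `U` be the strictly upper triangular matrix of ones and `F̄(π) = U - π·U`. Being a
coboundary, `F̄` is a cocycle, and it is antisymmetric because `U + Uᵀ` (all ones off the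
diagonal) is fixed by every permutation. The antisymmetrization `(M, π) ↦ (M - Mᵀ, π)` is an
endomorphism of `Mat_n(ℤ) ⋊ S_n`, and the graph `{(F̄(π), π)}` of a coboundary is a subgroup,
so it suffices to check that the image `(O - Oᵀ, (k k+1))` of each generator lies in it.
-/

/-- The braid relations. -/
def braidRels (n : ℕ) : Set (FreeGroup (Fin (n - 1))) :=
  {r | (∃ i j : Fin (n - 1), (j : ℕ) = (i : ℕ) + 1 ∧
        r = .of i * .of j * .of i * (.of j * .of i * .of j)⁻¹) ∨
       (∃ i j : Fin (n - 1), (i : ℕ) + 2 ≤ (j : ℕ) ∧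
        r = .of i * .of j * (.of j * .of i)⁻¹)}

/-- The braid group `B_n`. -/
abbrev BraidGroup (n : ℕ) := PresentedGroup (braidRels n)

/-- The Artin generator `σ_{k+1}` (0-based index `k`). -/
def braidGen {n : ℕ} (i : Fin (n - 1)) : BraidGroup n := PresentedGroup.of i

/-- The strand index `k`, viewed inside `Fin n`. -/
def lo {n : ℕ} (k : Fin (n - 1)) : Fin n := ⟨k, by have := k.isLt; omega⟩

/-- The strand index `k + 1`, viewed inside `Fin n`. -/
def hi {n : ℕ} (k : Fin (n - 1)) : Fin n := ⟨(k : ℕ) + 1, by have := k.isLt; omega⟩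

/-- The action of `S_n` on `n × n` integer matrices, simultaneously permuting rows and
columns: `(π·M)[i,j] = M[π⁻¹ i, π⁻¹ j]`. -/
def matPermAct (n : ℕ) :
    Equiv.Perm (Fin n) →* MulAut (Multiplicative (Matrix (Fin n) (Fin n) ℤ)) where
  toFun π :=
    { toFun := fun M => Multiplicative.ofAdd fun i j => Multiplicative.toAdd M (π⁻¹ i) (π⁻¹ j)
      invFun := fun M => Multiplicative.ofAdd fun i j => Multiplicative.toAdd M (π i) (π j)
      left_inv := fun M => funext fun i => funext fun j =>
        show Multiplicative.toAdd M (π⁻¹ (π i)) (π⁻¹ (π j)) = Multiplicative.toAdd M i j by simp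
      right_inv := fun M => funext fun i => funext fun j =>
        show Multiplicative.toAdd M (π (π⁻¹ i)) (π (π⁻¹ j)) = Multiplicative.toAdd M i j by simp
      map_mul' := fun M M' => rfl }
  map_one' := by ext M; simp
  map_mul' := fun π ρ => by
    ext M
    rfl

/-- The semidirect product `Mat_n(ℤ) ⋊ S_n`. -/
abbrev SGEGroup (n : ℕ) :=
  SemidirectProduct (Multiplicative (Matrix (Fin n) (Fin n) ℤ)) (Equiv.Perm (Fin n))
    (matPermAct n)

/-- The value `(O_{k,k+1}, (k, k+1))` of the super-Gauss-Epple homomorphism on the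
generator `σ_k`, where `O_{i,j}` is the matrix with a single `1` entry at `(i,j)`. -/
def sgeGen {n : ℕ} (k : Fin (n - 1)) : SGEGroup n :=
  ⟨Multiplicative.ofAdd (Matrix.single (lo k) (hi k) 1), Equiv.swap (lo k) (hi k)⟩

namespace SemidirectProduct

variable {N G : Type*} [Group N] [Group G] (φ : G →* MulAut N)

/-- The graph `{(u · g(u⁻¹), g)}` of the coboundary of `u`: the conjugate of `inr G` by `inl u`. -/
def coboundaryGraph (u : N) : Subgroup (N ⋊[φ] G) where
  carrier := {x | x.left = u * φ x.right u⁻¹}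
  one_mem' := by simp
  mul_mem' := by
    rintro x y (hx : x.left = _) (hy : y.left = _)
    simp [mul_left, hx, hy, mul_assoc]
  inv_mem' := by
    rintro x (hx : x.left = _)
    simp [inv_left, hx, map_mul, map_inv]

end SemidirectProduct

open Matrix

def antisymmHom (n : ℕ) : SGEGroup n →* SGEGroup n :=
  SemidirectProduct.map
    (AddMonoidHom.toMultiplicative
      { toFun := fun M => M - Mᵀ, map_zero' := by simp, map_add' := fun M N => by
          rw [transpose_add]; abel })
    (MonoidHom.id _) fun _ => rfl

def upperOnes (n : ℕ) : Matrix (Fin n) (Fin n) ℤ := of fun i j => if i < j then 1 else 0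

def Fbar (n : ℕ) (s : Equiv.Perm (Fin n)) : Matrix (Fin n) (Fin n) ℤ :=
  of fun i j => upperOnes n i j - upperOnes n (s⁻¹ i) (s⁻¹ j)

theorem mem_coboundaryGraph_upperOnes {n : ℕ} {x : SGEGroup n} :
    x ∈ SemidirectProduct.coboundaryGraph (matPermAct n) (.ofAdd (upperOnes n)) ↔
      Multiplicative.toAdd x.left = Fbar n x.right :=
  Iff.rfl

theorem Fbar_mul {n : ℕ} (s t : Equiv.Perm (Fin n)) :
    Fbar n (s * t) = Fbar n s + of fun i j => Fbar n t (s⁻¹ i) (s⁻¹ j) := by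
  ext i j
  simp only [Fbar, Matrix.add_apply, of_apply, _root_.mul_inv_rev, Equiv.Perm.mul_apply]
  ring

theorem upperOnes_add_upperOnes_swap {n : ℕ} (i j : Fin n) :
    upperOnes n i j + upperOnes n j i = if i = j then 0 else 1 := by
  rcases lt_trichotomy i j with h | rfl | h
  · simp [upperOnes, h, h.ne, h.not_gt]
  · simp [upperOnes]
  · simp [upperOnes, h, h.ne', h.not_gt]

theorem Fbar_transpose {n : ℕ} (s : Equiv.Perm (Fin n)) : (Fbar n s)ᵀ = -Fbar n s := by
  ext i j
  have h := upperOnes_add_upperOnes_swap i j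
  have hs := upperOnes_add_upperOnes_swap (s⁻¹ i) (s⁻¹ j)
  simp only [EmbeddingLike.apply_eq_iff_eq] at hs
  simp only [Fbar, transpose_apply, neg_apply, of_apply]
  linarith

theorem Fbar_swap {n : ℕ} {a b : Fin n} (hab : (a : ℕ) + 1 = b) :
    Fbar n (Equiv.swap a b) = single a b 1 - (single a b 1)ᵀ := by
  have swap_val : ∀ x : Fin n, ((Equiv.swap a b x : Fin n) : ℕ) =
      if (x : ℕ) = a then (b : ℕ) else if (x : ℕ) = b then (a : ℕ) else (x : ℕ) := by
    intro x
    rw [Equiv.swap_apply_def]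
    split_ifs <;> simp_all [Fin.ext_iff]
  ext i j
  simp only [Fbar, upperOnes, Equiv.swap_inv, Matrix.sub_apply, transpose_apply, single, of_apply,
    Fin.lt_def, swap_val, Fin.ext_iff]
  split_ifs <;> omega

theorem antisymmHom_sgeGen_mem {n : ℕ} (k : Fin (n - 1)) :
    antisymmHom n (sgeGen k) ∈
      SemidirectProduct.coboundaryGraph (matPermAct n) (.ofAdd (upperOnes n)) :=
  (Fbar_swap (a := lo k) (b := hi k) rfl).symm

open Matrix in
theorem exists_cocycle_Fbar_general (n : ℕ)
    (SGE : BraidGroup n →* SGEGroup n)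
    (hSGE : ∀ k : Fin (n - 1), SGE (braidGen k) = sgeGen k) :
    ∃ F : Equiv.Perm (Fin n) → Matrix (Fin n) (Fin n) ℤ,
      (∀ β : BraidGroup n,
        F (SGE β).right =
          Multiplicative.toAdd (SGE β).left - (Multiplicative.toAdd (SGE β).left)ᵀ) ∧
      (∀ s t : Equiv.Perm (Fin n),
        F (s * t) = F s + Matrix.of fun i j => F t (s⁻¹ i) (s⁻¹ j)) ∧
      (∀ s : Equiv.Perm (Fin n), (F s)ᵀ = -F s) := by
  refine ⟨Fbar n, fun β => ?_, Fbar_mul, Fbar_transpose⟩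
  have hβ : β ∈ (SemidirectProduct.coboundaryGraph (matPermAct n)
      (.ofAdd (upperOnes n))).comap ((antisymmHom n).comp SGE) :=
    PresentedGroup.generated_by _ _ (fun k => by
      have hk := antisymmHom_sgeGen_mem k
      rw [← hSGE k] at hk
      exact hk) β
  exact (mem_coboundaryGraph_upperOnes.1 hβ).symm

open Matrix in
/-- There is a function `F̄ : S_n → Mat_n(ℤ)` such that (i) for every braid `β` with
`SGE(β) = (M, π)` one has `F̄(π) = M - Mᵀ`; (ii) `F̄` is a 1-cocycle:
`F̄(στ) = F̄(σ) + σ·F̄(τ)` where `(σ·M)[i,j] = M[σ⁻¹ i, σ⁻¹ j]`; and (iii) every `F̄(σ)`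
is antisymmetric. -/
theorem exists_cocycle_Fbar (n : ℕ) (hn : 2 ≤ n)
    (SGE : BraidGroup n →* SGEGroup n)
    (hSGE : ∀ k : Fin (n - 1), SGE (braidGen k) = sgeGen k) :
    ∃ F : Equiv.Perm (Fin n) → Matrix (Fin n) (Fin n) ℤ,
      (∀ β : BraidGroup n,
        F (SGE β).right =
          Multiplicative.toAdd (SGE β).left - (Multiplicative.toAdd (SGE β).left)ᵀ) ∧
      (∀ s t : Equiv.Perm (Fin n),
        F (s * t) = F s + Matrix.of fun i j => F t (s⁻¹ i) (s⁻¹ j)) ∧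
      (∀ s : Equiv.Perm (Fin n), (F s)ᵀ = -F s) :=
  exists_cocycle_Fbar_general n SGE hSGE
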